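/- The map (t, u) ↦ (u₁ + it₁, …, u_m + it_m, 1) from ℝ^m × S^{m−1} into ℂ^{m+1} lands in the tube over the future light cone 𝒰 = {z : Σᵢ₌₁^m (Re zᵢ)² = (Re z_{m+1})², Re z_{m+1} > 0}, is injective, and moreover distinct points (t,u) ≠ (t′,u′) map into distinct orbits of the ℂ-half-ray action z ↦ (r·xⱼ + i(s·xⱼ+yⱼ))ⱼ, r > 0. -/
import Mathlib


theorem section_into_future_tube_injective_on_leaves (m : ℕ) :
    let ι : (Fin m → ℝ) → (Fin m → ℝ) → Fin (m + 1) → ℂ := fun t u j =>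
      if h : (j : ℕ) < m then ((u ⟨j, h⟩ : ℝ) : ℂ) + Complex.I * ((t ⟨j, h⟩ : ℝ) : ℂ)
      else 1
    ∀ t u t' u' : Fin m → ℝ,
      (∑ i, (u i) ^ 2 = 1) → (∑ i, (u' i) ^ 2 = 1) →
      -- the image lies in the tube over the future light cone
      ((∑ i : Fin m, ((ι t u i.castSucc).re) ^ 2 = ((ι t u (Fin.last m)).re) ^ 2) ∧
        0 < (ι t u (Fin.last m)).re) ∧
      -- distinct points map into distinct leaves of the ℂ-half-ray action
      (∀ r s : ℝ, 0 < r →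
        (∀ j : Fin (m + 1),
            ι t' u' j = ((r * (ι t u j).re : ℝ) : ℂ)
              + Complex.I * ((s * (ι t u j).re + (ι t u j).im : ℝ) : ℂ)) →
        t = t' ∧ u = u') := by
  intro ι t u t' u' hu hu'
  have hlast : ∀ a b : Fin m → ℝ, ι a b (Fin.last m) = 1 := by
    intro a b
    simp [ι, Fin.last]
  have hcs : ∀ a b : Fin m → ℝ, ∀ i : Fin m,
      ι b a (Fin.castSucc i) = (a i : ℂ) + Complex.I * (b i : ℂ) := by
    intro a b i
    have h : ((Fin.castSucc i : Fin (m+1)) : ℕ) < m := i.isLt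
    have he : (⟨((Fin.castSucc i : Fin (m+1)) : ℕ), h⟩ : Fin m) = i := by
      ext; simp
    simp only [ι, dif_pos h, he]
  have hre : ∀ a b : Fin m → ℝ, ∀ i : Fin m, (ι b a (Fin.castSucc i)).re = a i := by
    intro a b i
    rw [hcs]
    simp
  have him : ∀ a b : Fin m → ℝ, ∀ i : Fin m, (ι b a (Fin.castSucc i)).im = b i := by
    intro a b i
    rw [hcs]
    simp
  refine ⟨⟨?_, ?_⟩, ?_⟩
  · simp only [hre, hlast]
    simpa using hu
  · rw [hlast]; norm_num
  · intro r s hr h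
    have hL := h (Fin.last m)
    rw [hlast, hlast] at hL
    simp only [Complex.one_re, Complex.one_im, mul_one] at hL
    have h1 := congrArg Complex.re hL
    have h2 := congrArg Complex.im hL
    simp at h1 h2
    obtain ⟨hr1, hs0⟩ : r = 1 ∧ s = 0 := ⟨h1.symm, h2.symm⟩
    subst hr1 hs0
    have key : ∀ i : Fin m, t i = t' i ∧ u i = u' i := by
      intro i
      have hi := h (Fin.castSucc i)
      simp only [hre, him] at hi
      rw [hcs] at hi
      have hre' := congrArg Complex.re hi
      have him' := congrArg Complex.im hi
      simp at hre' him' ⊢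
      exact ⟨him'.symm, hre'.symm⟩
    exact ⟨funext fun i => (key i).1, funext fun i => (key i).2⟩
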